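/- arXiv:2212.12097 — 8 statements merged into one kernel-verified Lean document; each statement's English description precedes it below -/
import Mathlib

section
/- Let v_i, v_j, v_k, v_l, θ_i, θ_j, θ_k, θ_l be real numbers, and for each ordered pair (a,b) define wᴿ_ab = v_a·v_b·cos(θ_a − θ_b) and wᴵ_ab = v_a·v_b·sin(θ_a − θ_b). Then wᴿ_ij·wᴿ_kl − wᴵ_ij·wᴵ_kl = wᴿ_il·wᴿ_jk + wᴵ_il·wᴵ_jk and wᴿ_ij·wᴵ_kl + wᴵ_ij·wᴿ_kl = −wᴿ_il·wᴵ_jk + wᴵ_il·wᴿ_jk. -/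
open Real

/-- The 4-cycle constraints in the w space: with wᴿ_ab = v_a v_b cos(θ_a − θ_b)
and wᴵ_ab = v_a v_b sin(θ_a − θ_b), one has
wᴿ_ij·wᴿ_kl − wᴵ_ij·wᴵ_kl = wᴿ_il·wᴿ_jk + wᴵ_il·wᴵ_jk and
wᴿ_ij·wᴵ_kl + wᴵ_ij·wᴿ_kl = −wᴿ_il·wᴵ_jk + wᴵ_il·wᴿ_jk. -/
theorem w_space_4cycle (vi vj vk vl θi θj θk θl : ℝ) :
    ((vi * vj * cos (θi - θj)) * (vk * vl * cos (θk - θl))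
        - (vi * vj * sin (θi - θj)) * (vk * vl * sin (θk - θl)) =
      (vi * vl * cos (θi - θl)) * (vj * vk * cos (θj - θk))
        + (vi * vl * sin (θi - θl)) * (vj * vk * sin (θj - θk))) ∧
    ((vi * vj * cos (θi - θj)) * (vk * vl * sin (θk - θl))
        + (vi * vj * sin (θi - θj)) * (vk * vl * cos (θk - θl)) =
      -((vi * vl * cos (θi - θl)) * (vj * vk * sin (θj - θk)))
        + (vi * vl * sin (θi - θl)) * (vj * vk * cos (θj - θk))) := by
  simp only [cos_sub, sin_sub]
  constructor <;> ring
end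

section
/- Let θᵘ be a real number with 0 < θᵘ ≤ π/2. Then for every real θ with |θ| ≤ θᵘ, cos θ ≤ 1 − ((1 − cos θᵘ)/(θᵘ)²)·θ². -/
/-!
Since `1 - cos θ = 2 sin² (θ/2)`, the ratio `(1 - cos θ) / θ²` equals `sinc² (θ/2) / 2`.
By concavity of `sin` on `[0, π]`, the secant slope `sin x / x` decreases on `(0, π]`, so the
ratio decreases in `|θ|` on `(0, 2π]` and is smallest at `|θ| = θᵘ`.
-/

open Real Set

lemma Real.antitoneOn_sin_div : AntitoneOn (fun x => sin x / x) (Ioc 0 π) := by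
  have h := strictConcaveOn_sin_Icc.concaveOn.antitoneOn_slope_gt (x := 0) ⟨le_rfl, pi_pos.le⟩
  intro x ⟨hx0, hxπ⟩ y ⟨hy0, hyπ⟩ hxy
  simpa [slope_def_field] using h ⟨⟨hx0.le, hxπ⟩, hx0⟩ ⟨⟨hy0.le, hyπ⟩, hy0⟩ hxy

lemma Real.one_sub_cos_eq_two_mul_sin_half_sq (x : ℝ) : 1 - cos x = 2 * sin (x / 2) ^ 2 := by
  have h := cos_two_mul' (x / 2)
  rw [mul_div_cancel₀ x two_ne_zero] at h
  linarith [sin_sq_add_cos_sq (x / 2)]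

lemma Real.antitoneOn_one_sub_cos_div_sq :
    AntitoneOn (fun x => (1 - cos x) / x ^ 2) (Ioc 0 (2 * π)) := by
  have half_mem {x : ℝ} (hx : x ∈ Ioc 0 (2 * π)) : x / 2 ∈ Ioc 0 π :=
    ⟨by linarith [hx.1], by linarith [hx.2]⟩
  have ratio_eq {x : ℝ} (hx : x ≠ 0) :
      (1 - cos x) / x ^ 2 = (sin (x / 2) / (x / 2)) ^ 2 / 2 := by
    rw [one_sub_cos_eq_two_mul_sin_half_sq]
    field_simp
  intro x hx y hy hxy
  simp only [ratio_eq hx.1.ne', ratio_eq hy.1.ne']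
  have hy_nonneg : 0 ≤ sin (y / 2) / (y / 2) :=
    div_nonneg (sin_nonneg_of_nonneg_of_le_pi (half_mem hy).1.le (half_mem hy).2) (half_mem hy).1.le
  gcongr ?_ ^ 2 / 2
  exact antitoneOn_sin_div (half_mem hx) (half_mem hy) (by linarith)

/-- Quadratic over-estimator of cosine: for 0 < θᵘ ≤ π/2 and |θ| ≤ θᵘ,
cos θ ≤ 1 − ((1 − cos θᵘ)/(θᵘ)²)·θ². -/
theorem cos_quadratic_overestimator (θu : ℝ) (hpos : 0 < θu) (hle : θu ≤ π / 2) :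
    ∀ θ : ℝ, |θ| ≤ θu →
      cos θ ≤ 1 - ((1 - cos θu) / θu ^ 2) * θ ^ 2 := by
  intro θ hθ
  rcases eq_or_ne θ 0 with rfl | hθ0
  · simp
  have habs_pos : 0 < |θ| := abs_pos.mpr hθ0
  have hratio : (1 - cos θu) / θu ^ 2 ≤ (1 - cos |θ|) / |θ| ^ 2 :=
    antitoneOn_one_sub_cos_div_sq ⟨habs_pos, by linarith [pi_pos]⟩
      ⟨hpos, by linarith [pi_pos]⟩ hθ
  calc cos θ = 1 - (1 - cos |θ|) / |θ| ^ 2 * θ ^ 2 := by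
        rw [cos_abs, sq_abs]
        field_simp
        ring
    _ ≤ 1 - (1 - cos θu) / θu ^ 2 * θ ^ 2 := by gcongr
end

section
/- Let θᵘ be a real number with 0 < θᵘ ≤ π/2. Then for every real θ with −θᵘ ≤ θ ≤ θᵘ, sin θ ≤ cos(θᵘ/2)·θ + sin(θᵘ/2) − cos(θᵘ/2)·(θᵘ/2). -/
open Real

private lemma sin_ge_sub_cube' : ∀ x : ℝ, 0 ≤ x → x - x ^ 3 / 6 ≤ sin x := by
  have h : Monotone (fun x : ℝ => sin x - (x - x ^ 3 / 6)) := by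
    apply monotone_of_hasDerivAt_nonneg (f' := fun x => cos x - (1 - x ^ 2 / 2))
    · intro x
      have h1 : HasDerivAt (fun x : ℝ => x - x ^ 3 / 6) (1 - 3 * x ^ 2 / 6) x := by
        simpa [Pi.sub_def] using ((hasDerivAt_id x).sub (((hasDerivAt_pow 3 x)).div_const 6))
      have : HasDerivAt (fun x : ℝ => sin x - (x - x ^ 3 / 6)) (cos x - (1 - 3 * x ^ 2 / 6)) x :=
        (hasDerivAt_sin x).sub h1
      convert this using 1
      ring
    · intro x
      simpa using Real.one_sub_sq_div_two_le_cos (x := x)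
  intro x hx
  have := h hx
  simpa using this

private lemma cos_le_quartic : ∀ x : ℝ, 0 ≤ x → cos x ≤ 1 - x ^ 2 / 2 + x ^ 4 / 24 := by
  have h : MonotoneOn (fun x : ℝ => (1 - x ^ 2 / 2 + x ^ 4 / 24) - cos x) (Set.Ici 0) := by
    apply monotoneOn_of_hasDerivWithinAt_nonneg (convex_Ici 0)
      (f' := fun x => (-x + 4 * x ^ 3 / 24) + sin x)
    · fun_prop
    · intro x _
      have h1 : HasDerivAt (fun x : ℝ => (1 - x ^ 2 / 2 + x ^ 4 / 24) - cos x)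
          ((-x + 4 * x ^ 3 / 24) + sin x) x := by
        have h2 : HasDerivAt (fun x : ℝ => 1 - x ^ 2 / 2 + x ^ 4 / 24)
            (-x + 4 * x ^ 3 / 24) x := by
          simpa [Pi.add_def] using ((((hasDerivAt_pow 2 x).div_const 2).const_sub 1).add
            ((hasDerivAt_pow 4 x).div_const 24))
        have : HasDerivAt (fun x : ℝ => (1 - x ^ 2 / 2 + x ^ 4 / 24) - cos x)
            ((-x + 4 * x ^ 3 / 24) - -sin x) x := h2.sub (hasDerivAt_cos x)
        convert this using 1
        ring
      exact h1.hasDerivWithinAt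
    · intro x hx
      rw [interior_Ici] at hx
      have hx' : (0:ℝ) ≤ x := le_of_lt hx
      have := sin_ge_sub_cube' x hx'
      nlinarith
  intro x hx
  have := h (Set.self_mem_Ici) (Set.mem_Ici.2 hx) hx
  simpa using this

/-- Linear over-estimator of sine (tangent line at θᵘ/2): for 0 < θᵘ ≤ π/2 and
θ ∈ [−θᵘ, θᵘ], sin θ ≤ cos(θᵘ/2)·θ + sin(θᵘ/2) − cos(θᵘ/2)·(θᵘ/2). -/
theorem sin_tangent_overestimator (θu : ℝ) (hpos : 0 < θu) (hle : θu ≤ π / 2) :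
    ∀ θ : ℝ, -θu ≤ θ → θ ≤ θu →
      sin θ ≤ cos (θu / 2) * θ + sin (θu / 2) - cos (θu / 2) * (θu / 2) := by
  intro θ h1 h2
  set a := θu / 2 with ha
  have ha0 : 0 < a := by positivity
  have ha4 : a ≤ π / 4 := by linarith
  have hπ : (0:ℝ) < π := pi_pos
  -- f θ = cos a * θ + (sin a - cos a * a) - sin θ, f' = cos a - cos θ
  set f : ℝ → ℝ := fun θ => cos a * θ + (sin a - cos a * a) - sin θ with hf
  have hderiv : ∀ x : ℝ, HasDerivAt f (cos a - cos x) x := by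
    intro x
    have h1 : HasDerivAt (fun x : ℝ => cos a * x + (sin a - cos a * a)) (cos a) x := by
      simpa using ((hasDerivAt_id x).const_mul (cos a)).add_const (sin a - cos a * a)
    simpa [hf, Pi.sub_def] using h1.sub (hasDerivAt_sin x)
  have hfa : f a = 0 := by simp only [hf]; ring
  have hcos_anti : ∀ x y : ℝ, 0 ≤ x → x ≤ y → y ≤ π → cos y ≤ cos x := by
    intro x y hx hxy hy
    exact Real.cos_le_cos_of_nonneg_of_le_pi hx hy hxy
  have goal : 0 ≤ f θ → sin θ ≤ cos a * θ + sin a - cos a * a := by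
    intro h; simp only [hf] at h; linarith
  apply goal
  rcases le_total a θ with hc | hc
  · -- θ ∈ [a, 2a], f monotone
    have hmono : MonotoneOn f (Set.Icc a (2 * a)) := by
      apply monotoneOn_of_hasDerivWithinAt_nonneg (convex_Icc a (2*a))
        (f' := fun x => cos a - cos x)
      · fun_prop
      · intro x _; exact (hderiv x).hasDerivWithinAt
      · intro x hx
        rw [interior_Icc] at hx
        have hx2 := hx.2
        have := hcos_anti a x (le_of_lt ha0) (le_of_lt hx.1) (by linarith)
        linarith
    have := hmono (Set.mem_Icc.2 ⟨le_refl a, by linarith⟩)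
      (Set.mem_Icc.2 ⟨hc, by linarith⟩) hc
    rwa [hfa] at this
  · rcases le_total (-a) θ with hc2 | hc2
    · -- θ ∈ [-a, a], f antitone
      have hm : AntitoneOn f (Set.Icc (-a) a) := by
        apply antitoneOn_of_hasDerivWithinAt_nonpos (convex_Icc (-a) a)
          (f' := fun x => cos a - cos x)
        · fun_prop
        · intro x _; exact (hderiv x).hasDerivWithinAt
        · intro x hx
          rw [interior_Icc] at hx
          have hxa : |x| ≤ a := abs_le.2 ⟨le_of_lt hx.1, le_of_lt hx.2⟩
          have : cos a ≤ cos x := by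
            rw [← Real.cos_abs x]
            exact hcos_anti |x| a (abs_nonneg x) hxa (by linarith)
          linarith
      have := hm (Set.mem_Icc.2 ⟨hc2, hc⟩) (Set.mem_Icc.2 ⟨by linarith, le_refl a⟩) hc
      rwa [hfa] at this
    · -- θ ∈ [-2a, -a], f monotone, need f(-2a) ≥ 0
      have hmono : MonotoneOn f (Set.Icc (-(2*a)) (-a)) := by
        apply monotoneOn_of_hasDerivWithinAt_nonneg (convex_Icc _ _)
          (f' := fun x => cos a - cos x)
        · fun_prop
        · intro x _; exact (hderiv x).hasDerivWithinAt
        · intro x hx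
          rw [interior_Icc] at hx
          have : cos x ≤ cos a := by
            rw [← Real.cos_neg x]
            exact hcos_anti a (-x) (le_of_lt ha0) (by linarith [hx.2]) (by nlinarith [hx.1])
          linarith
      have hend : f (-(2*a)) ≤ f θ := by
        apply hmono (Set.mem_Icc.2 ⟨le_refl _, by linarith⟩)
          (Set.mem_Icc.2 ⟨by linarith [h1], hc2⟩) (by linarith [h1])
      have hg : 0 ≤ f (-(2*a)) := by
        simp only [hf]
        have hs2 : sin (2*a) = 2 * sin a * cos a := Real.sin_two_mul a
        have hsin_neg : sin (-(2*a)) = -(2 * sin a * cos a) := by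
          rw [Real.sin_neg, hs2]
        rw [hsin_neg]
        -- need: cos a * (-(2a)) + sin a - cos a * a + 2 sin a cos a ≥ 0
        have hA : a - a ^ 3 / 6 ≤ sin a := sin_ge_sub_cube' a (le_of_lt ha0)
        have hB : cos a ≤ 1 - a ^ 2 / 2 + a ^ 4 / 24 := cos_le_quartic a (le_of_lt ha0)
        have hC : 1 - a ^ 2 / 2 ≤ cos a := Real.one_sub_sq_div_two_le_cos
        have ha1 : a ≤ 1 := by nlinarith [Real.pi_le_four]
        have hcpos : 0 < cos a := Real.cos_pos_of_mem_Ioo ⟨by linarith, by linarith⟩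
        have hs0 : 0 ≤ a - a ^ 3 / 6 := by nlinarith
        have hsin0 : 0 ≤ sin a := le_trans hs0 hA
        have h1p : (3 - a ^ 2 : ℝ) ≤ 1 + 2 * cos a := by linarith
        have h3pos : (0:ℝ) ≤ 3 - a ^ 2 := by nlinarith
        have hprod : (a - a ^ 3 / 6) * (3 - a ^ 2) ≤ sin a * (1 + 2 * cos a) :=
          mul_le_mul hA h1p h3pos hsin0
        have hrhs : 3 * a * cos a ≤ 3 * a * (1 - a ^ 2 / 2 + a ^ 4 / 24) := by
          have : (0:ℝ) ≤ 3 * a := by linarith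
          exact mul_le_mul_of_nonneg_left hB this
        nlinarith [hprod, hrhs, pow_nonneg ha0.le 5]
      linarith
end

section
/- Let θ̲, θ̄ be real numbers with −π/2 < θ̲ ≤ θ̄ < π/2, and let v_i ≥ 0, v_j ≥ 0 and θ ∈ [θ̲, θ̄] be real numbers. Set wᴿ = v_i·v_j·cos θ and wᴵ = v_i·v_j·sin θ. Then tan(θ̲)·wᴿ ≤ wᴵ ≤ tan(θ̄)·wᴿ. -/
open Real

/- On (−π/2, π/2) the cosine is positive and the tangent increasing, so `tan a ≤ tan θ ≤ tan b`
multiplied by `cos θ > 0` gives `tan a · cos θ ≤ sin θ ≤ tan b · cos θ`; scaling by `vi vj ≥ 0`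
yields the cut. -/

theorem Real.tan_mul_cos_le_sin {a θ : ℝ} (ha : -(π / 2) < a) (hθ : θ < π / 2) (h : a ≤ θ) :
    tan a * cos θ ≤ sin θ := by
  have hθ_mem : θ ∈ Set.Ioo (-(π / 2)) (π / 2) := ⟨ha.trans_le h, hθ⟩
  have hcos : 0 < cos θ := cos_pos_of_mem_Ioo hθ_mem
  have htan : tan a ≤ tan θ :=
    strictMonoOn_tan.monotoneOn ⟨ha, h.trans_lt hθ⟩ hθ_mem h
  calc tan a * cos θ ≤ tan θ * cos θ := mul_le_mul_of_nonneg_right htan hcos.le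
    _ = sin θ := tan_mul_cos hcos.ne'

theorem Real.sin_le_tan_mul_cos {θ b : ℝ} (hθ : -(π / 2) < θ) (hb : b < π / 2) (h : θ ≤ b) :
    sin θ ≤ tan b * cos θ := by
  have := tan_mul_cos_le_sin (a := -b) (θ := -θ) (by linarith) (by linarith) (by linarith)
  rw [tan_neg, cos_neg, sin_neg] at this
  linarith

theorem phase_angle_difference_cut_general (θl θu vi vj θ : ℝ)
    (hl : -(π / 2) < θl) (hu : θu < π / 2)
    (hvi : 0 ≤ vi) (hvj : 0 ≤ vj) (hθl : θl ≤ θ) (hθu : θ ≤ θu) :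
    tan θl * (vi * vj * cos θ) ≤ vi * vj * sin θ ∧
      vi * vj * sin θ ≤ tan θu * (vi * vj * cos θ) := by
  have hv : 0 ≤ vi * vj := mul_nonneg hvi hvj
  constructor
  · calc tan θl * (vi * vj * cos θ) = vi * vj * (tan θl * cos θ) := by ring
      _ ≤ vi * vj * sin θ :=
        mul_le_mul_of_nonneg_left (tan_mul_cos_le_sin hl (hθu.trans_lt hu) hθl) hv
  · calc vi * vj * sin θ ≤ vi * vj * (tan θu * cos θ) :=
        mul_le_mul_of_nonneg_left (sin_le_tan_mul_cos (hl.trans_le hθl) hu hθu) hv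
      _ = tan θu * (vi * vj * cos θ) := by ring

/-- Validity of the phase angle difference cut: for −π/2 < θ̲ ≤ θ̄ < π/2,
v_i, v_j ≥ 0 and θ ∈ [θ̲, θ̄], the lifted variables wᴿ = v_i v_j cos θ and
wᴵ = v_i v_j sin θ satisfy tan(θ̲)·wᴿ ≤ wᴵ ≤ tan(θ̄)·wᴿ. -/
theorem phase_angle_difference_cut (θl θu vi vj θ : ℝ)
    (hl : -(π / 2) < θl) (hlu : θl ≤ θu) (hu : θu < π / 2)
    (hvi : 0 ≤ vi) (hvj : 0 ≤ vj) (hθl : θl ≤ θ) (hθu : θ ≤ θu) :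
    tan θl * (vi * vj * cos θ) ≤ vi * vj * sin θ ∧
      vi * vj * sin θ ≤ tan θu * (vi * vj * cos θ) :=
  phase_angle_difference_cut_general θl θu vi vj θ hl hu hvi hvj hθl hθu
end

section
/- Let l and u be real numbers with l ≤ u. Then the convex hull of the set {(v, v²) : v ∈ [l, u]} ⊆ ℝ² equals the set {(v, w) ∈ ℝ² : v² ≤ w and w ≤ (l + u)·v − l·u}. -/
/-- Vertical segment membership helper. -/
lemma vert_segment_mem (x a b w : ℝ) (hab : a ≤ b) (h1 : a ≤ w) (h2 : w ≤ b) :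
    ((x, w) : ℝ × ℝ) ∈ segment ℝ (x, a) (x, b) := by
  rcases eq_or_lt_of_le hab with rfl | hlt
  · have : w = a := le_antisymm h2 h1
    subst this
    exact left_mem_segment ℝ _ _
  · refine ⟨(b - w) / (b - a), (w - a) / (b - a), ?_, ?_, ?_, ?_⟩
    · apply div_nonneg <;> linarith
    · apply div_nonneg <;> linarith
    · have hd : b - a ≠ 0 := by linarith
      field_simp
      ring
    · have hd : b - a ≠ 0 := by linarith
      simp only [Prod.smul_mk, smul_eq_mul, Prod.mk_add_mk, Prod.mk.injEq]
      constructor <;> field_simp <;> ring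

/-- The convex hull of the graph of v ↦ v² over [l, u] is exactly the region
between the parabola and the McCormick (secant) upper bound. -/
theorem convexHull_sq_graph (l u : ℝ) (h : l ≤ u) :
    convexHull ℝ {p : ℝ × ℝ | ∃ v ∈ Set.Icc l u, p = (v, v ^ 2)} =
      {p : ℝ × ℝ | p.1 ^ 2 ≤ p.2 ∧ p.2 ≤ (l + u) * p.1 - l * u} := by
  apply Set.Subset.antisymm
  · apply convexHull_min
    · rintro p ⟨v, ⟨hv1, hv2⟩, rfl⟩
      refine ⟨le_refl _, ?_⟩
      simp only [Set.mem_setOf_eq]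
      nlinarith
    · rintro ⟨x1, x2⟩ ⟨hp1, hp2⟩ ⟨y1, y2⟩ ⟨hq1, hq2⟩ a b ha hb hab
      simp only [Set.mem_setOf_eq, Prod.smul_mk, smul_eq_mul, Prod.mk_add_mk] at *
      constructor
      · nlinarith [mul_nonneg (mul_nonneg ha hb) (sq_nonneg (x1 - y1)),
          mul_le_mul_of_nonneg_left hp1 ha, mul_le_mul_of_nonneg_left hq1 hb]
      · have hlu : a * (l * u) + b * (l * u) = l * u := by
          rw [← add_mul, hab, one_mul]
        nlinarith [mul_le_mul_of_nonneg_left hp2 ha, mul_le_mul_of_nonneg_left hq2 hb]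
  · rintro ⟨v, w⟩ ⟨hw1, hw2⟩
    simp only [Set.mem_setOf_eq] at hw1 hw2
    have hl : l ≤ v := by nlinarith
    have hu : v ≤ u := by nlinarith
    set S : Set (ℝ × ℝ) := {p : ℝ × ℝ | ∃ v ∈ Set.Icc l u, p = (v, v ^ 2)} with hS
    have hC : Convex ℝ (convexHull ℝ S) := convex_convexHull ℝ S
    have hA : ((v, v ^ 2) : ℝ × ℝ) ∈ convexHull ℝ S :=
      subset_convexHull ℝ S ⟨v, ⟨hl, hu⟩, rfl⟩
    have hP : ((l, l ^ 2) : ℝ × ℝ) ∈ convexHull ℝ S :=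
      subset_convexHull ℝ S ⟨l, ⟨le_refl _, h⟩, rfl⟩
    have hQ : ((u, u ^ 2) : ℝ × ℝ) ∈ convexHull ℝ S :=
      subset_convexHull ℝ S ⟨u, ⟨h, le_refl _⟩, rfl⟩
    have hB : ((v, (l + u) * v - l * u) : ℝ × ℝ) ∈ convexHull ℝ S := by
      rcases eq_or_lt_of_le h with rfl | hlt
      · have hv : v = l := le_antisymm hu hl
        subst hv
        have : (v + v) * v - v * v = v ^ 2 := by ring
        rw [this]
        exact hA
      · apply hC.segment_subset hP hQ
        refine ⟨(u - v) / (u - l), (v - l) / (u - l), ?_, ?_, ?_, ?_⟩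
        · apply div_nonneg <;> linarith
        · apply div_nonneg <;> linarith
        · have hd : u - l ≠ 0 := by linarith
          field_simp
          ring
        · have hd : u - l ≠ 0 := by linarith
          simp only [Prod.smul_mk, smul_eq_mul, Prod.mk_add_mk, Prod.mk.injEq]
          constructor <;> field_simp <;> ring
    have hsec : v ^ 2 ≤ (l + u) * v - l * u := le_trans hw1 hw2
    exact hC.segment_subset hA hB (vert_segment_mem v (v ^ 2) ((l + u) * v - l * u) w hsec hw1 hw2)
end

section
/- Let n = 6, let l, u : Fin 6 → ℝ with l(j) ≤ u(j) for all j, let B = {x : Fin 6 → ℝ | ∀ j, l(j) ≤ x(j) ≤ u(j)} be the box, and let V = {x ∈ B | ∀ j, x(j) = l(j) or x(j) = u(j)} be its set of vertices. Define φ : (Fin 6 → ℝ) → (Fin 6 → ℝ) × ({(j₁, j₂) : Fin 6 × Fin 6 // j₁ ≠ j₂} → ℝ) by φ(x) = (x, fun (j₁, j₂) ↦ x(j₁)·x(j₂)). Then the convex hull of φ(B) equals the convex hull of φ(V). -/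
section Aux

variable (l u : Fin 6 → ℝ)

private noncomputable def φbil (x : Fin 6 → ℝ) :
    (Fin 6 → ℝ) × ({p : Fin 6 × Fin 6 // p.1 ≠ p.2} → ℝ) :=
  (x, fun p => x p.1.1 * x p.1.2)

private lemma φbil_affine (x : Fin 6 → ℝ) (a : Fin 6) (t : ℝ)
    (hx : x a = t * l a + (1 - t) * u a) :
    φbil x = t • φbil (Function.update x a (l a))
      + (1 - t) • φbil (Function.update x a (u a)) := by
  unfold φbil
  ext i
  · simp only [Prod.fst_add, Prod.smul_fst, Pi.add_apply, Pi.smul_apply, smul_eq_mul]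
    rcases eq_or_ne i a with rfl | hi
    · simp [hx]
    · simp [Function.update_of_ne hi]; ring
  · obtain ⟨⟨p1, p2⟩, hp⟩ := i
    simp only [Prod.snd_add, Prod.smul_snd, Pi.add_apply, Pi.smul_apply, smul_eq_mul]
    rcases eq_or_ne p1 a with rfl | h1
    · have h2 : p2 ≠ p1 := fun e => hp e.symm
      simp [Function.update_of_ne h2, hx]; ring
    · rcases eq_or_ne p2 a with rfl | h2
      · simp [Function.update_of_ne h1, hx]; ring
      · simp [Function.update_of_ne h1, Function.update_of_ne h2]; ring

private lemma φbil_key (h : ∀ j, l j ≤ u j) (S : Finset (Fin 6)) :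
    ∀ x : Fin 6 → ℝ, (∀ j, l j ≤ x j ∧ x j ≤ u j) →
      (∀ j ∉ S, x j = l j ∨ x j = u j) →
      φbil x ∈ convexHull ℝ (φbil ''
        {x : Fin 6 → ℝ | (∀ j, l j ≤ x j ∧ x j ≤ u j) ∧
          ∀ j, x j = l j ∨ x j = u j}) := by
  induction S using Finset.induction with
  | empty =>
    intro x hbox hv
    exact subset_convexHull ℝ _ ⟨x, ⟨hbox, fun j => hv j (Finset.notMem_empty j)⟩, rfl⟩
  | @insert a S ha IH =>
    intro x hbox hv
    rcases eq_or_lt_of_le (h a) with heq | hlt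
    · refine IH x hbox fun j hj => ?_
      rcases eq_or_ne j a with rfl | hja
      · left; exact le_antisymm (heq ▸ (hbox j).2) (hbox j).1
      · exact hv j (by simp [hj, hja])
    · set t : ℝ := (u a - x a) / (u a - l a) with ht
      have hd : u a - l a > 0 := sub_pos.mpr hlt
      have ht0 : 0 ≤ t := div_nonneg (sub_nonneg.mpr (hbox a).2) hd.le
      have ht1 : t ≤ 1 := by
        rw [div_le_one hd]; linarith [(hbox a).1]
      have hxa : x a = t * l a + (1 - t) * u a := by
        rw [ht]; linear_combination (div_mul_cancel₀ (u a - x a) hd.ne')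
      have hy : ∀ j ∉ S, (Function.update x a (l a)) j = l j ∨
          (Function.update x a (l a)) j = u j := by
        intro j hj
        rcases eq_or_ne j a with rfl | hja
        · left; simp
        · rw [Function.update_of_ne hja]; exact hv j (by simp [hj, hja])
      have hz : ∀ j ∉ S, (Function.update x a (u a)) j = l j ∨
          (Function.update x a (u a)) j = u j := by
        intro j hj
        rcases eq_or_ne j a with rfl | hja
        · right; simp
        · rw [Function.update_of_ne hja]; exact hv j (by simp [hj, hja])
      have hyb : ∀ j, l j ≤ (Function.update x a (l a)) j ∧
          (Function.update x a (l a)) j ≤ u j := by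
        intro j
        rcases eq_or_ne j a with rfl | hja
        · simp [h j]
        · rw [Function.update_of_ne hja]; exact hbox j
      have hzb : ∀ j, l j ≤ (Function.update x a (u a)) j ∧
          (Function.update x a (u a)) j ≤ u j := by
        intro j
        rcases eq_or_ne j a with rfl | hja
        · simp [h j]
        · rw [Function.update_of_ne hja]; exact hbox j
      rw [φbil_affine l u x a t hxa]
      exact (convex_convexHull ℝ _) (IH _ hyb hy) (IH _ hzb hz) ht0 (by linarith) (by ring)

end Aux

/-- Extreme-point representation captures the convex hull of the lifted bilinear
monomials: for the map φ sending x ∈ ℝ⁶ to (x, all products x(j₁)·x(j₂) with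
j₁ ≠ j₂), the convex hull of φ(B) over the box B equals the convex hull of φ(V)
over its vertex set V. -/
theorem convexHull_box_eq_convexHull_vertices_bilinear
    (l u : Fin 6 → ℝ) (h : ∀ j, l j ≤ u j) :
    convexHull ℝ
        ((fun x : Fin 6 → ℝ =>
            ((x, fun p : {p : Fin 6 × Fin 6 // p.1 ≠ p.2} => x p.1.1 * x p.1.2) :
              (Fin 6 → ℝ) × ({p : Fin 6 × Fin 6 // p.1 ≠ p.2} → ℝ))) ''
          {x : Fin 6 → ℝ | ∀ j, l j ≤ x j ∧ x j ≤ u j}) =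
      convexHull ℝ
        ((fun x : Fin 6 → ℝ =>
            ((x, fun p : {p : Fin 6 × Fin 6 // p.1 ≠ p.2} => x p.1.1 * x p.1.2) :
              (Fin 6 → ℝ) × ({p : Fin 6 × Fin 6 // p.1 ≠ p.2} → ℝ))) ''
          {x : Fin 6 → ℝ | (∀ j, l j ≤ x j ∧ x j ≤ u j) ∧
            ∀ j, x j = l j ∨ x j = u j}) := by
  apply le_antisymm
  · apply convexHull_min _ (convex_convexHull ℝ _)
    rintro _ ⟨x, hx, rfl⟩
    exact φbil_key l u h Finset.univ x hx (fun j hj => absurd (Finset.mem_univ j) hj)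
  · exact convexHull_mono (Set.image_mono fun x hx => hx.1)
end

section
/- Let θ̲, θ̄ be real numbers with −π/2 ≤ θ̲ < θ̄ ≤ π/2, let θᶜ = (cos θ̄ − cos θ̲)/(θ̄ − θ̲), and let θᴹ be a real number with θᴹ ≥ max(|θ̲|, |θ̄|). Let z ∈ {0, 1} and let c, θ be real numbers such that: if z = 1 then c = cos θ and θ̲ ≤ θ ≤ θ̄; and if z = 0 then c = 0 and |θ| ≤ θᴹ. Then −c + θᶜ·θ ≤ (θᶜ·θ̲ − cos θ̲)·z + |θᶜ|·θᴹ·(1 − z). -/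
open Real

/-- Validity of the on/off big-M secant constraint (8a): with secant slope
θᶜ = (cos θ̄ − cos θ̲)/(θ̄ − θ̲) over [θ̲, θ̄] ⊆ [−π/2, π/2] and big-M constant
θᴹ ≥ max(|θ̲|, |θ̄|), for any switching value z ∈ {0, 1}, if z = 1 then
c = cos θ with θ ∈ [θ̲, θ̄], and if z = 0 then c = 0 with |θ| ≤ θᴹ, and in
either case −c + θᶜ·θ ≤ (θᶜ·θ̲ − cos θ̲)·z + |θᶜ|·θᴹ·(1 − z). -/
theorem onoff_bigM_cos_secant (θl θu θM z c θ : ℝ)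
    (hl : -(π / 2) ≤ θl) (hlt : θl < θu) (hu : θu ≤ π / 2)
    (hM : max |θl| |θu| ≤ θM)
    (hz : z = 0 ∨ z = 1)
    (hon : z = 1 → c = cos θ ∧ θl ≤ θ ∧ θ ≤ θu)
    (hoff : z = 0 → c = 0 ∧ |θ| ≤ θM) :
    -c + ((cos θu - cos θl) / (θu - θl)) * θ ≤
      (((cos θu - cos θl) / (θu - θl)) * θl - cos θl) * z +
        |(cos θu - cos θl) / (θu - θl)| * θM * (1 - z) := by
  set s := (cos θu - cos θl) / (θu - θl) with hs
  have hd : (0:ℝ) < θu - θl := sub_pos.mpr hlt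
  rcases hz with h0 | h1
  · obtain ⟨hc, hθ⟩ := hoff h0
    subst hc h0
    have hθM : 0 ≤ θM := le_trans (abs_nonneg θ) hθ
    have : s * θ ≤ |s| * θM := by
      calc s * θ ≤ |s * θ| := le_abs_self _
        _ = |s| * |θ| := abs_mul _ _
        _ ≤ |s| * θM := mul_le_mul_of_nonneg_left hθ (abs_nonneg _)
    simpa using this
  · obtain ⟨hc, hθl, hθu⟩ := hon h1
    subst hc h1
    -- concavity of cos on [-π/2, π/2]
    have hconc := (strictConcaveOn_cos_Icc).concaveOn
    have ha : 0 ≤ (θu - θ) / (θu - θl) := div_nonneg (by linarith) hd.le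
    have hb : 0 ≤ (θ - θl) / (θu - θl) := div_nonneg (by linarith) hd.le
    have hab : (θu - θ) / (θu - θl) + (θ - θl) / (θu - θl) = 1 := by
      field_simp
      ring
    have hml : θl ∈ Set.Icc (-(π/2)) (π/2) := ⟨hl, by linarith⟩
    have hmu : θu ∈ Set.Icc (-(π/2)) (π/2) := ⟨by linarith, hu⟩
    have key := hconc.2 hml hmu ha hb hab
    have hcomb : ((θu - θ) / (θu - θl)) • θl + ((θ - θl) / (θu - θl)) • θu = θ := by
      simp only [smul_eq_mul]
      field_simp
      ring
    rw [hcomb, smul_eq_mul, smul_eq_mul] at key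
    have hsθ : s * (θ - θl) ≤ cos θ - cos θl := by
      rw [hs, div_mul_eq_mul_div, div_le_iff₀ hd]
      have key' := mul_le_mul_of_nonneg_right key hd.le
      have e1 : (θu - θ) / (θu - θl) * cos θl * (θu - θl) = (θu - θ) * cos θl := by
        field_simp
      have e2 : (θ - θl) / (θu - θl) * cos θu * (θu - θl) = (θ - θl) * cos θu := by
        field_simp
      nlinarith [key', e1, e2]
    nlinarith [hsθ]
end

section
/- Let θ̲, θ̄ be real numbers with −π/2 ≤ θ̲ ≤ θ̄ ≤ π/2, let θᵘ = max(|θ̲|, |θ̄|) with θᵘ > 0, set k = (1 − cos θᵘ)/(θᵘ)², and let θᴹ be a real number with θᴹ ≥ θᵘ. Let z ∈ {0, 1} and let c, θ be real numbers such that: if z = 1 then c = cos θ and θ̲ ≤ θ ≤ θ̄; and if z = 0 then c = 0 and |θ| ≤ θᴹ. Then c ≤ z − k·θ² + k·(θᴹ)²·(1 − z). -/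
open Real

lemma sin_concave_aux {a b : ℝ} (ha : 0 ≤ a) (hab : a ≤ b) (hb : b ≤ π) :
    (a / b) * Real.sin b ≤ Real.sin a := by
  rcases eq_or_lt_of_le (ha.trans hab) with h | hb0
  · have ha0 : a = 0 := le_antisymm (hab.trans h.symm.le) ha
    simp [ha0, ← h]
  · have hsum : (1 - a / b) + a / b = 1 := by ring
    have h1 : 0 ≤ 1 - a / b := by
      have : a / b ≤ 1 := (div_le_one hb0).2 hab
      linarith
    have h2 : 0 ≤ a / b := div_nonneg ha hb0.le
    have hc := strictConcaveOn_sin_Icc.concaveOn.2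
      (Set.mem_Icc.2 ⟨le_refl (0:ℝ), Real.pi_pos.le⟩)
      (Set.mem_Icc.2 ⟨ha.trans hab, hb⟩) h1 h2 hsum
    have heq : (1 - a / b) • (0:ℝ) + (a / b) • b = a := by
      simp only [smul_eq_mul, mul_zero, zero_add]
      field_simp
    rw [heq] at hc
    simpa using hc

lemma cos_le_quad {u x : ℝ} (hu0 : 0 < u) (hu : u ≤ π / 2) (hx : |x| ≤ u) :
    Real.cos x ≤ 1 - ((1 - Real.cos u) / u ^ 2) * x ^ 2 := by
  have hy : Real.cos x = Real.cos |x| := by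
    rcases abs_cases x with ⟨h, _⟩ | ⟨h, _⟩ <;> simp [h, Real.cos_neg]
  have hx2 : x ^ 2 = |x| ^ 2 := (sq_abs x).symm
  set y := |x| with hyd
  have hy0 : 0 ≤ y := abs_nonneg x
  have hpi : u / 2 ≤ π := by
    have := Real.pi_pos
    linarith
  have hkey := sin_concave_aux (a := y / 2) (b := u / 2)
    (by linarith) (by linarith) hpi
  have hsinb : 0 ≤ Real.sin (u / 2) := Real.sin_nonneg_of_nonneg_of_le_pi
    (by linarith) hpi
  have hsina : 0 ≤ Real.sin (y / 2) := Real.sin_nonneg_of_nonneg_of_le_pi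
    (by linarith) (by linarith)
  have hdiv : y / 2 / (u / 2) = y / u := by
    field_simp
  rw [hdiv] at hkey
  have hkey' : y * Real.sin (u / 2) ≤ Real.sin (y / 2) * u := by
    rw [div_mul_eq_mul_div, div_le_iff₀ hu0] at hkey
    exact hkey
  have hsq : y ^ 2 * Real.sin (u / 2) ^ 2 ≤ Real.sin (y / 2) ^ 2 * u ^ 2 := by
    nlinarith [hkey', mul_nonneg hy0 hsinb, mul_nonneg hsina hu0.le]
  have hcx : Real.cos y = 1 - 2 * Real.sin (y / 2) ^ 2 := by
    have h := Real.cos_two_mul (y / 2)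
    rw [show 2 * (y / 2) = y by ring] at h
    nlinarith [Real.sin_sq_add_cos_sq (y / 2)]
  have hcu : Real.cos u = 1 - 2 * Real.sin (u / 2) ^ 2 := by
    have h := Real.cos_two_mul (u / 2)
    rw [show 2 * (u / 2) = u by ring] at h
    nlinarith [Real.sin_sq_add_cos_sq (u / 2)]
  rw [hy, hx2, hcx, hcu]
  have hmain : (1 - (1 - 2 * Real.sin (u / 2) ^ 2)) / u ^ 2 * y ^ 2 ≤
      2 * Real.sin (y / 2) ^ 2 := by
    rw [div_mul_eq_mul_div, div_le_iff₀ (by positivity)]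
    nlinarith [hsq]
  linarith

/-- Validity of the on/off big-M quadratic over-estimator constraint (8b): with
θᵘ = max(|θ̲|, |θ̄|) > 0, k = (1 − cos θᵘ)/(θᵘ)², and big-M constant θᴹ ≥ θᵘ,
for any switching value z ∈ {0, 1}, if z = 1 then c = cos θ with θ ∈ [θ̲, θ̄],
and if z = 0 then c = 0 with |θ| ≤ θᴹ, and in either case
c ≤ z − k·θ² + k·(θᴹ)²·(1 − z). -/
theorem onoff_bigM_cos_quadratic (θl θu θM z c θ : ℝ)
    (hl : -(π / 2) ≤ θl) (hlu : θl ≤ θu) (hu : θu ≤ π / 2)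
    (hpos : 0 < max |θl| |θu|)
    (hM : max |θl| |θu| ≤ θM)
    (hz : z = 0 ∨ z = 1)
    (hon : z = 1 → c = cos θ ∧ θl ≤ θ ∧ θ ≤ θu)
    (hoff : z = 0 → c = 0 ∧ |θ| ≤ θM) :
    c ≤ z - ((1 - cos (max |θl| |θu|)) / (max |θl| |θu|) ^ 2) * θ ^ 2 +
      ((1 - cos (max |θl| |θu|)) / (max |θl| |θu|) ^ 2) * θM ^ 2 * (1 - z) := by
  set U := max |θl| |θu| with hU
  have hUpi : U ≤ π / 2 := by
    have h1 : |θl| ≤ π / 2 := abs_le.2 ⟨hl, by linarith⟩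
    have h2 : |θu| ≤ π / 2 := abs_le.2 ⟨by linarith, hu⟩
    exact max_le h1 h2
  have hcosU : Real.cos U ≤ 1 := Real.cos_le_one U
  have hk : 0 ≤ (1 - Real.cos U) / U ^ 2 :=
    div_nonneg (by linarith) (by positivity)
  rcases hz with h0 | h1
  · obtain ⟨hc, hθ⟩ := hoff h0
    have hθ2 : θ ^ 2 ≤ θM ^ 2 := by
      have := abs_nonneg θ
      nlinarith [sq_abs θ]
    subst h0 hc
    nlinarith [mul_le_mul_of_nonneg_left hθ2 hk]
  · obtain ⟨hc, hθl, hθu⟩ := hon h1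
    have habs : |θ| ≤ U := by
      refine abs_le.2 ⟨?_, ?_⟩
      · have h1 := neg_abs_le θl
        have h2 := le_max_left |θl| |θu|
        simp only [hU]
        linarith
      · have h1 := le_abs_self θu
        have h2 := le_max_right |θl| |θu|
        simp only [hU]
        linarith
    have := cos_le_quad hpos hUpi habs
    subst h1 hc
    linarith
end
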